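/- (IPL*-AndCut) For every base B and all IPL formulas φ, ψ, χ: if ⊩*_B φ ∧ ψ and φ, ψ ⊩*_B χ, then ⊩*_B χ. -/
import Mathlib


/-- Formulas of intuitionistic propositional logic over a denumerable
set of atoms (here: `ℕ`). -/
inductive IPLForm : Type where
  | atom : ℕ → IPLForm
  | and : IPLForm → IPLForm → IPLForm
  | or : IPLForm → IPLForm → IPLForm
  | imp : IPLForm → IPLForm → IPLForm
  | bot : IPLForm
deriving DecidableEq

/-- A (second-level) atomic rule `(Q₁ ▷ q₁, …, Qₙ ▷ qₙ) ⇒ q`;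
an axiom `⇒ q` is the case `prems = []`. -/
structure IPLRule : Type where
  prems : List (Finset ℕ × ℕ)
  concl : ℕ

/-- A base is a set of atomic rules. -/
abbrev IPLBase := Set IPLRule

/-- Derivability in a base `B`: `S ⊢_B q`. -/
inductive IPLDer (B : IPLBase) : Finset ℕ → ℕ → Prop where
  | ref {S : Finset ℕ} {q : ℕ} : q ∈ S → IPLDer B S q
  | app {S : Finset ℕ} {r : IPLRule} :
      r ∈ B → (∀ pr ∈ r.prems, IPLDer B (S ∪ pr.1) pr.2) →
      IPLDer B S r.concl

/-- Sandqvist's support relation `⊩_B φ`. -/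
def Supp : IPLForm → IPLBase → Prop
  | .atom p, B => IPLDer B ∅ p
  | .and φ ψ, B => Supp φ B ∧ Supp ψ B
  | .or φ ψ, B => ∀ C : IPLBase, B ⊆ C → ∀ p : ℕ,
      (∀ D : IPLBase, C ⊆ D → Supp φ D → IPLDer D ∅ p) →
      (∀ D : IPLBase, C ⊆ D → Supp ψ D → IPLDer D ∅ p) →
      IPLDer C ∅ p
  | .imp φ ψ, B => ∀ C : IPLBase, B ⊆ C → Supp φ C → Supp ψ C
  | .bot, B => ∀ p : ℕ, IPLDer B ∅ p

/-- Support of a formula relative to a context (finite set of formulas):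
`Γ ⊩_B φ`. -/
def SuppCtx (Γ : Finset IPLForm) (B : IPLBase) (φ : IPLForm) : Prop :=
  ∀ C : IPLBase, B ⊆ C → (∀ ψ ∈ Γ, Supp ψ C) → Supp φ C

/-- The modified support relation `⊩*_B φ`, in which the clause for `∧`
takes the form of the generalized elimination rule. -/
def Supp' : IPLForm → IPLBase → Prop
  | .atom p, B => IPLDer B ∅ p
  | .and φ ψ, B => ∀ C : IPLBase, B ⊆ C → ∀ p : ℕ,
      (∀ D : IPLBase, C ⊆ D → Supp' φ D → Supp' ψ D → IPLDer D ∅ p) →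
      IPLDer C ∅ p
  | .or φ ψ, B => ∀ C : IPLBase, B ⊆ C → ∀ p : ℕ,
      (∀ D : IPLBase, C ⊆ D → Supp' φ D → IPLDer D ∅ p) →
      (∀ D : IPLBase, C ⊆ D → Supp' ψ D → IPLDer D ∅ p) →
      IPLDer C ∅ p
  | .imp φ ψ, B => ∀ C : IPLBase, B ⊆ C → Supp' φ C → Supp' ψ C
  | .bot, B => ∀ p : ℕ, IPLDer B ∅ p

/-- Support relative to a context for the modified semantics: `Γ ⊩*_B φ`. -/
def SuppCtx' (Γ : Finset IPLForm) (B : IPLBase) (φ : IPLForm) : Prop :=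
  ∀ C : IPLBase, B ⊆ C → (∀ ψ ∈ Γ, Supp' ψ C) → Supp' φ C

/-- Gentzen's natural deduction system NJ for IPL, with finite sets as
contexts: `Γ ⊢ φ`. -/
inductive NJ : Finset IPLForm → IPLForm → Prop where
  | ax {Γ : Finset IPLForm} {φ : IPLForm} : φ ∈ Γ → NJ Γ φ
  | andI {Γ φ ψ} : NJ Γ φ → NJ Γ ψ → NJ Γ (.and φ ψ)
  | andE1 {Γ φ ψ} : NJ Γ (.and φ ψ) → NJ Γ φ
  | andE2 {Γ φ ψ} : NJ Γ (.and φ ψ) → NJ Γ ψ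
  | orI1 {Γ φ ψ} : NJ Γ φ → NJ Γ (.or φ ψ)
  | orI2 {Γ φ ψ} : NJ Γ ψ → NJ Γ (.or φ ψ)
  | orE {Γ φ ψ χ} : NJ Γ (.or φ ψ) → NJ (insert φ Γ) χ → NJ (insert ψ Γ) χ → NJ Γ χ
  | impI {Γ φ ψ} : NJ (insert φ Γ) ψ → NJ Γ (.imp φ ψ)
  | impE {Γ φ ψ} : NJ Γ (.imp φ ψ) → NJ Γ φ → NJ Γ ψ
  | botE {Γ φ} : NJ Γ .bot → NJ Γ φ

theorem der_mono {B C : IPLBase} (h : B ⊆ C) {S : Finset ℕ} {q : ℕ}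
    (d : IPLDer B S q) : IPLDer C S q := by
  induction d with
  | ref h' => exact .ref h'
  | app hr _ ih => exact .app (h hr) ih

theorem supp'_mono : ∀ (φ : IPLForm) {B C : IPLBase}, B ⊆ C → Supp' φ B → Supp' φ C
  | .atom _, _, _, h, hs => der_mono h hs
  | .and _ _, _, _, h, hs => fun D hD => hs D (h.trans hD)
  | .or _ _, _, _, h, hs => fun D hD => hs D (h.trans hD)
  | .imp _ _, _, _, h, hs => fun D hD => hs D (h.trans hD)
  | .bot, _, _, h, hs => fun p => der_mono h (hs p)

theorem suppCtx'_pair {φ ψ : IPLForm} {D : IPLBase}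
    (hφ : Supp' φ D) (hψ : Supp' ψ D) : ∀ θ ∈ ({φ, ψ} : Finset IPLForm), Supp' θ D := by
  intro θ hθ
  rcases Finset.mem_insert.mp hθ with h | h
  · exact h ▸ hφ
  · exact (Finset.mem_singleton.mp h) ▸ hψ

/-- (IPL*-AndCut) If `⊩*_B φ ∧ ψ` and `φ, ψ ⊩*_B χ`, then `⊩*_B χ`. -/
theorem ipl_star_and_cut (B : IPLBase) (φ ψ χ : IPLForm)
    (h1 : Supp' (.and φ ψ) B) (h2 : SuppCtx' {φ, ψ} B χ) :
    Supp' χ B := by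
  induction χ generalizing B with
  | atom p =>
    exact h1 B (le_refl _) p (fun D hD hφ hψ => h2 D hD (suppCtx'_pair hφ hψ))
  | and χ1 χ2 ih1 ih2 =>
    intro C hC p K
    refine h1 C hC p (fun D hD hφ hψ => ?_)
    exact h2 D (hC.trans hD) (suppCtx'_pair hφ hψ) D (le_refl _) p
      (fun E hE => K E (hD.trans hE))
  | or χ1 χ2 ih1 ih2 =>
    intro C hC p K1 K2
    refine h1 C hC p (fun D hD hφ hψ => ?_)
    exact h2 D (hC.trans hD) (suppCtx'_pair hφ hψ) D (le_refl _) p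
      (fun E hE => K1 E (hD.trans hE)) (fun E hE => K2 E (hD.trans hE))
  | imp χ1 χ2 ih1 ih2 =>
    intro C hC hχ1
    refine ih2 C (supp'_mono _ hC h1) (fun D hD hΓ => ?_)
    exact h2 D (hC.trans hD) hΓ D (le_refl _) (supp'_mono _ hD hχ1)
  | bot =>
    intro p
    exact h1 B (le_refl _) p (fun D hD hφ hψ => h2 D hD (suppCtx'_pair hφ hψ) p)
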